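/- arXiv:2109.01448 — 2 statements merged into one kernel-verified Lean document; each statement's English description precedes it below -/
import Mathlib

section
/- Let n ≥ 1, Ω ⊆ ℝ × ℝ^n open, and g : (0,∞) → ℝ twice continuously differentiable. Let ρ : Ω → (0,∞) be continuously differentiable and ψ : Ω → ℝ twice continuously differentiable; set v := ∇_x ψ, q := ρ v, and p := ρ g′(ρ) − g(ρ). Assume on Ω the conservation of mass ∂_t ρ + div_x q = 0 and the Bernoulli relation ∂_t ψ + |v|²/2 + g′(ρ) = 0. Then the second form of the Euler–Lagrange equations holds on Ω: conservation of momentum ∂_t q + Div_x( ρ v ⊗ v + p I_n ) = 0 and conservation of energy ∂_t( ρ|v|²/2 + g(ρ) ) + div_x( ( ρ|v|²/2 + ρ g′(ρ) ) v ) = 0. -/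
/-!
Differentiating the Bernoulli relation `∂ₜψ + |v|²/2 + g'(ρ) = 0` in a direction `u` gives
`∂ᵤ∂ₜψ + ∑ₖ vₖ ∂ᵤvₖ + g''(ρ) ∂ᵤρ = 0`. Because second derivatives of `ψ` commute
(`∂ᵤvₖ = ∂ₖvᵤ` and `∂ᵤ∂ₜψ = ∂ₜvᵤ`, where `vᵤ = ∂ᵤψ`), for `u = eᵢ` this is Euler's equation
`∂ₜvᵢ + (v·∇)vᵢ + ∂ᵢ g'(ρ) = 0`; moreover `∂ᵢp = ρ ∂ᵢ g'(ρ)`. By the product rule the momentum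
residual is `vᵢ · (mass residual) + ρ · (Euler residual)`. In the energy flux, the differentiated
Bernoulli relation in direction `eⱼ` turns the residual into `(|v|²/2 + g'(ρ)) · (mass residual)`
plus `ρ (∑ₖ vₖ ∂ₜvₖ - ∑ⱼ vⱼ ∂ⱼ∂ₜψ)`, which vanishes again by symmetry of the Hessian.
-/

open scoped BigOperators

/-- Time partial derivative of a scalar function on spacetime `ℝ × ℝⁿ`. -/
noncomputable def pt {n : ℕ} (f : ℝ × (Fin n → ℝ) → ℝ) (p : ℝ × (Fin n → ℝ)) : ℝ :=
  fderiv ℝ f p (1, 0)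

/-- Spatial partial derivative `∂_j` of a scalar function on spacetime `ℝ × ℝⁿ`. -/
noncomputable def px {n : ℕ} (j : Fin n) (f : ℝ × (Fin n → ℝ) → ℝ) (p : ℝ × (Fin n → ℝ)) :
    ℝ :=
  fderiv ℝ f p (0, Pi.single j 1)

/-- The velocity field `v = ∇_x ψ` of a potential flow. -/
noncomputable def vel {n : ℕ} (ψ : ℝ × (Fin n → ℝ) → ℝ) (p : ℝ × (Fin n → ℝ)) :
    Fin n → ℝ :=
  fun i => px i ψ p

open Filter Topology

section Calculus
variable {E : Type*} [NormedAddCommGroup E] [NormedSpace ℝ E] {x : E}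

theorem fderiv_mul_apply {f h : E → ℝ} (hf : DifferentiableAt ℝ f x)
    (hh : DifferentiableAt ℝ h x) (u : E) :
    fderiv ℝ (fun z => f z * h z) x u = f x * fderiv ℝ h x u + h x * fderiv ℝ f x u := by
  simp [fderiv_fun_mul hf hh]

theorem fderiv_real_comp_apply {g : ℝ → ℝ} {f : E → ℝ} (hg : DifferentiableAt ℝ g (f x))
    (hf : DifferentiableAt ℝ f x) (u : E) :
    fderiv ℝ (fun z => g (f z)) x u = deriv g (f x) * fderiv ℝ f x u := by
  change fderiv ℝ (g ∘ f) x u = _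
  rw [(hg.hasDerivAt.comp_hasFDerivAt x hf.hasFDerivAt).fderiv]
  simp

theorem fderiv_half_sum_sq_apply {ι : Type*} [Fintype ι] {f : ι → E → ℝ}
    (hf : ∀ i, DifferentiableAt ℝ (f i) x) (u : E) :
    fderiv ℝ (fun z => (∑ i, f i z ^ 2) / 2) x u = ∑ i, f i x * fderiv ℝ (f i) x u := by
  simp_rw [div_eq_mul_inv]
  rw [fderiv_mul_const (by fun_prop),
    fderiv_fun_sum (A := fun i z => f i z ^ 2) fun i _ => (hf i).pow 2]
  simp only [fderiv_fun_pow 2 (hf _), Nat.add_one_sub_one, pow_one, nsmul_eq_mul, Nat.cast_ofNat,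
    smul_apply, sum_apply, smul_eq_mul, Finset.mul_sum]
  exact Finset.sum_congr rfl fun i _ => by ring

theorem fderiv_mul_deriv_sub_apply {g : ℝ → ℝ} {ρ : E → ℝ} (hρ : DifferentiableAt ℝ ρ x)
    (hg : DifferentiableAt ℝ g (ρ x)) (hg' : DifferentiableAt ℝ (deriv g) (ρ x)) (u : E) :
    fderiv ℝ (fun z => ρ z * deriv g (ρ z) - g (ρ z)) x u
      = ρ x * deriv (deriv g) (ρ x) * fderiv ℝ ρ x u := by
  have hgρ : DifferentiableAt ℝ (fun z => g (ρ z)) x := hg.comp x hρ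
  have hg'ρ : DifferentiableAt ℝ (fun z => deriv g (ρ z)) x := hg'.comp x hρ
  rw [fderiv_fun_sub (hρ.fun_mul hg'ρ) hgρ, sub_apply,
    fderiv_mul_apply hρ hg'ρ, fderiv_real_comp_apply hg' hρ,
    fderiv_real_comp_apply hg hρ]
  ring

theorem fderiv_fderiv_apply {ψ : E → ℝ} (hψ : DifferentiableAt ℝ (fderiv ℝ ψ) x) (u w : E) :
    fderiv ℝ (fun z => fderiv ℝ ψ z w) x u = fderiv ℝ (fderiv ℝ ψ) x u w := by
  simp [fderiv_clm_apply hψ (differentiableAt_const w)]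

theorem ContDiffAt.differentiableAt_fderiv {ψ : E → ℝ} (hψ : ContDiffAt ℝ 2 ψ x) :
    DifferentiableAt ℝ (fderiv ℝ ψ) x :=
  (hψ.fderiv_right (m := 1) le_rfl).differentiableAt one_ne_zero

theorem ContDiffAt.fderiv_fderiv_apply_comm {ψ : E → ℝ} (hψ : ContDiffAt ℝ 2 ψ x) (u w : E) :
    fderiv ℝ (fun z => fderiv ℝ ψ z w) x u = fderiv ℝ (fun z => fderiv ℝ ψ z u) x w := by
  rw [fderiv_fderiv_apply hψ.differentiableAt_fderiv,
    fderiv_fderiv_apply hψ.differentiableAt_fderiv]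
  exact hψ.isSymmSndFDerivAt (by simp) u w

end Calculus

section PotentialFlow
variable {E : Type*} [NormedAddCommGroup E] [NormedSpace ℝ E] {x : E}
  {ι : Type*} [Fintype ι] (e₀ : E) (e : ι → E) {g : ℝ → ℝ} {ρ ψ : E → ℝ}

theorem fderiv_bernoulli_eq_zero (hψ : DifferentiableAt ℝ (fderiv ℝ ψ) x)
    (hρ : DifferentiableAt ℝ ρ x) (hg' : DifferentiableAt ℝ (deriv g) (ρ x))
    (hber : ∀ᶠ z in 𝓝 x, fderiv ℝ ψ z e₀ + (∑ i, fderiv ℝ ψ z (e i) ^ 2) / 2 + deriv g (ρ z) = 0)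
    (u : E) :
    fderiv ℝ (fun z => fderiv ℝ ψ z e₀) x u
      + ∑ k, fderiv ℝ ψ x (e k) * fderiv ℝ (fun z => fderiv ℝ ψ z (e k)) x u
      + deriv (deriv g) (ρ x) * fderiv ℝ ρ x u = 0 := by
  have hv (w : E) : DifferentiableAt ℝ (fun z => fderiv ℝ ψ z w) x :=
    hψ.clm_apply (differentiableAt_const w)
  have hkin : DifferentiableAt ℝ (fun z => (∑ i, fderiv ℝ ψ z (e i) ^ 2) / 2) x := by fun_prop
  have hg'ρ : DifferentiableAt ℝ (fun z => deriv g (ρ z)) x := hg'.comp x hρ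
  have hB : (fun z => fderiv ℝ ψ z e₀ + (∑ i, fderiv ℝ ψ z (e i) ^ 2) / 2 + deriv g (ρ z))
      =ᶠ[𝓝 x] fun _ => 0 := hber
  have hB' := congrArg (fun L : E →L[ℝ] ℝ => L u) hB.fderiv_eq
  rw [fderiv_fun_add ((hv e₀).fun_add hkin) hg'ρ, fderiv_fun_add (hv e₀) hkin] at hB'
  simpa [fderiv_half_sum_sq_apply (fun i => hv (e i)), fderiv_real_comp_apply hg' hρ]
    using hB'

theorem energy_conservation (hψ : ContDiffAt ℝ 2 ψ x) (hρ : DifferentiableAt ℝ ρ x)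
    (hg : DifferentiableAt ℝ g (ρ x)) (hg' : DifferentiableAt ℝ (deriv g) (ρ x))
    (hmass : fderiv ℝ ρ x e₀ + ∑ j, fderiv ℝ (fun z => ρ z * fderiv ℝ ψ z (e j)) x (e j) = 0)
    (hber : ∀ᶠ z in 𝓝 x, fderiv ℝ ψ z e₀ + (∑ i, fderiv ℝ ψ z (e i) ^ 2) / 2 + deriv g (ρ z) = 0) :
    fderiv ℝ (fun z => ρ z * (∑ i, fderiv ℝ ψ z (e i) ^ 2) / 2 + g (ρ z)) x e₀
      + ∑ j, fderiv ℝ (fun z =>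
          (ρ z * (∑ i, fderiv ℝ ψ z (e i) ^ 2) / 2 + ρ z * deriv g (ρ z)) * fderiv ℝ ψ z (e j))
          x (e j) = 0 := by
  have hv (w : E) : DifferentiableAt ℝ (fun z => fderiv ℝ ψ z w) x :=
    hψ.differentiableAt_fderiv.clm_apply (differentiableAt_const w)
  have hK : DifferentiableAt ℝ (fun z => (∑ i, fderiv ℝ ψ z (e i) ^ 2) / 2) x := by fun_prop
  have hgρ : DifferentiableAt ℝ (fun z => g (ρ z)) x := hg.comp x hρ
  have hg'ρ : DifferentiableAt ℝ (fun z => deriv g (ρ z)) x := hg'.comp x hρ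
  have hdensity : fderiv ℝ (fun z => ρ z * (∑ i, fderiv ℝ ψ z (e i) ^ 2) / 2 + g (ρ z)) x e₀
      = ((∑ i, fderiv ℝ ψ x (e i) ^ 2) / 2 + deriv g (ρ x)) * fderiv ℝ ρ x e₀
        + ρ x * ∑ k, fderiv ℝ ψ x (e k) * fderiv ℝ (fun z => fderiv ℝ ψ z e₀) x (e k) := by
    have hsplit : (fun z => ρ z * (∑ i, fderiv ℝ ψ z (e i) ^ 2) / 2 + g (ρ z))
        = fun z => ρ z * ((∑ i, fderiv ℝ ψ z (e i) ^ 2) / 2) + g (ρ z) := by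
      funext z; ring
    rw [hsplit, fderiv_fun_add (hρ.fun_mul hK) hgρ, add_apply, fderiv_mul_apply hρ hK,
      fderiv_half_sum_sq_apply (fun i => hv (e i)), fderiv_real_comp_apply hg hρ]
    simp only [hψ.fderiv_fderiv_apply_comm e₀]
    ring
  have hflux (j : ι) :
      fderiv ℝ (fun z =>
          (ρ z * (∑ i, fderiv ℝ ψ z (e i) ^ 2) / 2 + ρ z * deriv g (ρ z)) * fderiv ℝ ψ z (e j))
          x (e j)
        = ((∑ i, fderiv ℝ ψ x (e i) ^ 2) / 2 + deriv g (ρ x))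
            * fderiv ℝ (fun z => ρ z * fderiv ℝ ψ z (e j)) x (e j)
          - ρ x * (fderiv ℝ ψ x (e j) * fderiv ℝ (fun z => fderiv ℝ ψ z e₀) x (e j)) := by
    have hsplit : (fun z =>
          (ρ z * (∑ i, fderiv ℝ ψ z (e i) ^ 2) / 2 + ρ z * deriv g (ρ z)) * fderiv ℝ ψ z (e j))
        = fun z => ((∑ i, fderiv ℝ ψ z (e i) ^ 2) / 2 + deriv g (ρ z))
            * (ρ z * fderiv ℝ ψ z (e j)) := by
      funext z; ring
    rw [hsplit, fderiv_mul_apply (hK.fun_add hg'ρ) (hρ.fun_mul (hv _)),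
      fderiv_fun_add hK hg'ρ, add_apply, fderiv_half_sum_sq_apply (fun i => hv (e i)),
      fderiv_real_comp_apply hg' hρ]
    linear_combination ρ x * fderiv ℝ ψ x (e j)
      * fderiv_bernoulli_eq_zero e₀ e hψ.differentiableAt_fderiv hρ hg' hber (e j)
  rw [hdensity, Finset.sum_congr rfl fun j _ => hflux j, Finset.sum_sub_distrib,
    ← Finset.mul_sum, ← Finset.mul_sum]
  linear_combination ((∑ i, fderiv ℝ ψ x (e i) ^ 2) / 2 + deriv g (ρ x)) * hmass

theorem momentum_conservation [DecidableEq ι] (hψ : ContDiffAt ℝ 2 ψ x)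
    (hρ : DifferentiableAt ℝ ρ x) (hg : DifferentiableAt ℝ g (ρ x))
    (hg' : DifferentiableAt ℝ (deriv g) (ρ x))
    (hmass : fderiv ℝ ρ x e₀ + ∑ j, fderiv ℝ (fun z => ρ z * fderiv ℝ ψ z (e j)) x (e j) = 0)
    (hber : ∀ᶠ z in 𝓝 x, fderiv ℝ ψ z e₀ + (∑ i, fderiv ℝ ψ z (e i) ^ 2) / 2 + deriv g (ρ z) = 0)
    (i : ι) :
    fderiv ℝ (fun z => ρ z * fderiv ℝ ψ z (e i)) x e₀
      + ∑ j, fderiv ℝ (fun z => ρ z * fderiv ℝ ψ z (e i) * fderiv ℝ ψ z (e j)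
          + (ρ z * deriv g (ρ z) - g (ρ z)) * (if i = j then 1 else 0)) x (e j) = 0 := by
  have hv (w : E) : DifferentiableAt ℝ (fun z => fderiv ℝ ψ z w) x :=
    hψ.differentiableAt_fderiv.clm_apply (differentiableAt_const w)
  have hP : DifferentiableAt ℝ (fun z => ρ z * deriv g (ρ z) - g (ρ z)) x :=
    (hρ.fun_mul (hg'.comp x hρ)).fun_sub (hg.comp x hρ)
  have hflux (j : ι) :
      fderiv ℝ (fun z => ρ z * fderiv ℝ ψ z (e i) * fderiv ℝ ψ z (e j)
          + (ρ z * deriv g (ρ z) - g (ρ z)) * (if i = j then 1 else 0)) x (e j)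
        = fderiv ℝ ψ x (e i) * fderiv ℝ (fun z => ρ z * fderiv ℝ ψ z (e j)) x (e j)
          + ρ x * (fderiv ℝ ψ x (e j) * fderiv ℝ (fun z => fderiv ℝ ψ z (e j)) x (e i))
          + if i = j then ρ x * deriv (deriv g) (ρ x) * fderiv ℝ ρ x (e i) else 0 := by
    have hsplit : (fun z => ρ z * fderiv ℝ ψ z (e i) * fderiv ℝ ψ z (e j)
          + (ρ z * deriv g (ρ z) - g (ρ z)) * (if i = j then 1 else 0))
        = fun z => fderiv ℝ ψ z (e i) * (ρ z * fderiv ℝ ψ z (e j))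
          + (ρ z * deriv g (ρ z) - g (ρ z)) * (if i = j then 1 else 0) := by
      funext z; ring
    rw [hsplit, fderiv_fun_add ((hv _).fun_mul (hρ.fun_mul (hv _))) (hP.mul_const _),
      add_apply, fderiv_mul_apply (hv _) (hρ.fun_mul (hv _)),
      fderiv_mul_const hP, smul_apply, fderiv_mul_deriv_sub_apply hρ hg hg',
      fderiv_mul_apply hρ (hv _), hψ.fderiv_fderiv_apply_comm (e j) (e i)]
    split_ifs with hij
    · subst hij; simp only [one_smul]; ring
    · simp only [zero_smul]; ring
  have hEuler := fderiv_bernoulli_eq_zero e₀ e hψ.differentiableAt_fderiv hρ hg' hber (e i)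
  rw [hψ.fderiv_fderiv_apply_comm (e i) e₀] at hEuler
  rw [fderiv_mul_apply hρ (hv (e i)) e₀]
  simp only [hflux, Finset.sum_add_distrib, ← Finset.mul_sum, Finset.sum_ite_eq,
    Finset.mem_univ, if_true]
  linear_combination fderiv ℝ ψ x (e i) * hmass + ρ x * hEuler

end PotentialFlow

theorem stmt14_general (n : ℕ) (Ω : Set (ℝ × (Fin n → ℝ))) (hΩ : IsOpen Ω)
    (g : ℝ → ℝ) (hg : ContDiffOn ℝ 2 g (Set.Ioi 0))
    (ρ : ℝ × (Fin n → ℝ) → ℝ) (hρpos : ∀ p ∈ Ω, 0 < ρ p) (hρ : ContDiffOn ℝ 1 ρ Ω)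
    (ψ : ℝ × (Fin n → ℝ) → ℝ) (hψ : ContDiffOn ℝ 2 ψ Ω)
    -- conservation of mass: ∂_t ρ + div_x (ρ v) = 0
    (hmass : ∀ p ∈ Ω, pt ρ p + ∑ j, px j (fun z => ρ z * vel ψ z j) p = 0)
    -- Bernoulli relation: ∂_t ψ + |v|²/2 + g′(ρ) = 0
    (hber : ∀ p ∈ Ω, pt ψ p + (∑ i, vel ψ p i ^ 2) / 2 + deriv g (ρ p) = 0) :
    -- conservation of momentum: ∂_t q + Div_x (ρ v ⊗ v + p Iₙ) = 0
    (∀ p ∈ Ω, ∀ i : Fin n,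
      pt (fun z => ρ z * vel ψ z i) p
        + ∑ j, px j (fun z =>
            ρ z * vel ψ z i * vel ψ z j
              + (ρ z * deriv g (ρ z) - g (ρ z)) * (if i = j then 1 else 0)) p = 0) ∧
    -- conservation of energy: ∂_t (ρ|v|²/2 + g(ρ)) + div_x ((ρ|v|²/2 + ρ g′(ρ)) v) = 0
    (∀ p ∈ Ω,
      pt (fun z => ρ z * (∑ i, vel ψ z i ^ 2) / 2 + g (ρ z)) p
        + ∑ j, px j (fun z =>
            (ρ z * (∑ i, vel ψ z i ^ 2) / 2 + ρ z * deriv g (ρ z)) * vel ψ z j) p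
          = 0) := by
  have regular (p) (hp : p ∈ Ω) : ContDiffAt ℝ 2 ψ p ∧ DifferentiableAt ℝ ρ p ∧
      DifferentiableAt ℝ g (ρ p) ∧ DifferentiableAt ℝ (deriv g) (ρ p) := by
    have hgp : ContDiffAt ℝ 2 g (ρ p) := hg.contDiffAt (Ioi_mem_nhds (hρpos p hp))
    exact ⟨hψ.contDiffAt (hΩ.mem_nhds hp),
      (hρ.contDiffAt (hΩ.mem_nhds hp)).differentiableAt one_ne_zero,
      hgp.differentiableAt two_ne_zero,
      (hgp.derivWithin (m := 1) le_rfl).differentiableAt one_ne_zero⟩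
  have hber_near (p) (hp : p ∈ Ω) : ∀ᶠ z in 𝓝 p, pt ψ z + (∑ i, vel ψ z i ^ 2) / 2
      + deriv g (ρ z) = 0 :=
    eventually_of_mem (hΩ.mem_nhds hp) hber
  constructor
  · intro p hp i
    obtain ⟨hψp, hρp, hgp, hg'p⟩ := regular p hp
    exact momentum_conservation (1, 0) (fun j => (0, Pi.single j 1)) hψp hρp hgp hg'p
      (hmass p hp) (hber_near p hp) i
  · intro p hp
    obtain ⟨hψp, hρp, hgp, hg'p⟩ := regular p hp
    exact energy_conservation (1, 0) (fun j => (0, Pi.single j 1)) hψp hρp hgp hg'p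
      (hmass p hp) (hber_near p hp)

/-- for an irrotational flow `v = ∇_x ψ` satisfying conservation of mass and
the Bernoulli relation, the second form of the Euler–Lagrange equations holds:
conservation of momentum and conservation of energy. -/
theorem stmt14 (n : ℕ) (hn : 1 ≤ n) (Ω : Set (ℝ × (Fin n → ℝ))) (hΩ : IsOpen Ω)
    (g : ℝ → ℝ) (hg : ContDiffOn ℝ 2 g (Set.Ioi 0))
    (ρ : ℝ × (Fin n → ℝ) → ℝ) (hρpos : ∀ p ∈ Ω, 0 < ρ p) (hρ : ContDiffOn ℝ 1 ρ Ω)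
    (ψ : ℝ × (Fin n → ℝ) → ℝ) (hψ : ContDiffOn ℝ 2 ψ Ω)
    -- conservation of mass: ∂_t ρ + div_x (ρ v) = 0
    (hmass : ∀ p ∈ Ω, pt ρ p + ∑ j, px j (fun z => ρ z * vel ψ z j) p = 0)
    -- Bernoulli relation: ∂_t ψ + |v|²/2 + g′(ρ) = 0
    (hber : ∀ p ∈ Ω, pt ψ p + (∑ i, vel ψ p i ^ 2) / 2 + deriv g (ρ p) = 0) :
    -- conservation of momentum: ∂_t q + Div_x (ρ v ⊗ v + p Iₙ) = 0
    (∀ p ∈ Ω, ∀ i : Fin n,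
      pt (fun z => ρ z * vel ψ z i) p
        + ∑ j, px j (fun z =>
            ρ z * vel ψ z i * vel ψ z j
              + (ρ z * deriv g (ρ z) - g (ρ z)) * (if i = j then 1 else 0)) p = 0) ∧
    -- conservation of energy: ∂_t (ρ|v|²/2 + g(ρ)) + div_x ((ρ|v|²/2 + ρ g′(ρ)) v) = 0
    (∀ p ∈ Ω,
      pt (fun z => ρ z * (∑ i, vel ψ z i ^ 2) / 2 + g (ρ z)) p
        + ∑ j, px j (fun z =>
            (ρ z * (∑ i, vel ψ z i ^ 2) / 2 + ρ z * deriv g (ρ z)) * vel ψ z j) p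
          = 0) :=
  stmt14_general n Ω hΩ g hg ρ hρpos hρ ψ hψ hmass hber
end

section
/- Let D ⊆ ℝ^d be open, L : ℝ^d → ℝ continuously differentiable, u : D → ℝ twice continuously differentiable, and ξ ∈ C_c^∞(D; ℝ^d). For ε ∈ ℝ small enough that y + εξ(y) ∈ D for all y in the support of ξ, define F(ε) := ∫_D [ L( ∇(u ∘ (id + εξ))(y) ) − L( ∇u(y) ) ] dy (the integrand is supported in the support of ξ). Then F is differentiable at ε = 0 and F′(0) = ∫_D ∑_{i,j=1}^d T_{ij}(y) ∂_j ξ_i(y) dy, where T(y) = ∇u(y) ⊗ ∇L(∇u(y)) − L(∇u(y)) I_d. In particular, F′(0) = 0 for every test field ξ if and only if T is divergence-free in the sense of distributions. -/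
open MeasureTheory
open scoped BigOperators

/-- Partial derivative in direction `j` of a scalar function on `ℝ^d`. -/
noncomputable def pd {d : ℕ} (j : Fin d) (f : (Fin d → ℝ) → ℝ) (y : Fin d → ℝ) : ℝ :=
  fderiv ℝ f y (Pi.single j 1)

/-- Euclidean gradient of a scalar function on `ℝ^d`. -/
noncomputable def grad {d : ℕ} (f : (Fin d → ℝ) → ℝ) (y : Fin d → ℝ) : Fin d → ℝ :=
  fun i => pd i f y

section Aux
open MeasureTheory Metric Set


lemma div_int_zero {d : ℕ} (f : Fin d → (Fin d → ℝ) → ℝ)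
    (hf : ∀ i, ContDiff ℝ 1 (f i)) (hs : ∀ i, HasCompactSupport (f i)) :
    ∫ x : Fin d → ℝ, ∑ i, fderiv ℝ (f i) x (Pi.single i 1) = 0 := by
  cases d with
  | zero => simp
  | succ n =>
    obtain ⟨R, hR0, hR⟩ : ∃ R, 0 < R ∧ (⋃ i, tsupport (f i)) ⊆ closedBall 0 R := by
      obtain ⟨R, hR0, hR⟩ :=
        (isCompact_iUnion fun i => (hs i)).isBounded.subset_closedBall_lt 0 0
      exact ⟨R, hR0, hR⟩
    have hRt : ∀ i, tsupport (f i) ⊆ closedBall (0 : Fin (n+1) → ℝ) R :=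
      fun i => (subset_iUnion (fun i => tsupport (f i)) i).trans hR
    set a : Fin (n+1) → ℝ := fun _ => -(R+1) with ha
    set b : Fin (n+1) → ℝ := fun _ => (R+1) with hb
    have hle : a ≤ b := fun i => by simp [ha, hb]; linarith
    have hnorm : ∀ (x : Fin (n+1) → ℝ) (i : Fin (n+1)), R < |x i| → ∀ j, x ∉ tsupport (f j) := by
      intro x i hxi j hxj
      have := hRt j hxj
      rw [mem_closedBall, dist_zero_right] at this
      have h2 : |x i| ≤ ‖x‖ := by
        simpa using norm_le_pi_norm x i
      linarith [abs_nonneg (x i)]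
    have key := integral_divergence_of_hasFDerivAt_off_countable' a b hle f
      (fun i x => fderiv ℝ (f i) x) ∅ Set.countable_empty
      (fun i => (hf i).continuous.continuousOn)
      (fun x _ i => ((hf i).differentiable one_ne_zero x).hasFDerivAt)
      (((continuous_finset_sum Finset.univ (fun i _ =>
        (((hf i).continuous_fderiv one_ne_zero).clm_apply continuous_const)))).continuousOn.integrableOn_compact
        isCompact_Icc)
    have hfaces : ∀ i : Fin (n+1),
        ((∫ (x : Fin n → ℝ) in Icc (a ∘ i.succAbove) (b ∘ i.succAbove), f i (i.insertNth (b i) x)) -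
         ∫ (x : Fin n → ℝ) in Icc (a ∘ i.succAbove) (b ∘ i.succAbove), f i (i.insertNth (a i) x)) = 0 := by
      intro i
      have h1 : ∀ x : Fin n → ℝ, f i (i.insertNth (b i) x) = 0 := by
        intro x
        refine image_eq_zero_of_notMem_tsupport (hnorm _ i ?_ i)
        rw [Fin.insertNth_apply_same]
        simp only [hb]
        rw [abs_of_nonneg (by linarith)]
        linarith
      have h2 : ∀ x : Fin n → ℝ, f i (i.insertNth (a i) x) = 0 := by
        intro x
        refine image_eq_zero_of_notMem_tsupport (hnorm _ i ?_ i)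
        rw [Fin.insertNth_apply_same]
        simp only [ha]
        rw [abs_of_nonpos (by linarith)]
        linarith
      simp [h1, h2]
    rw [Finset.sum_congr rfl (fun i _ => hfaces i), Finset.sum_const_zero] at key
    rw [← setIntegral_eq_integral_of_forall_compl_eq_zero (s := Icc a b), key]
    intro x hx
    have : ∃ i, R < |x i| := by
      by_contra h
      push_neg at h
      exact hx ⟨fun i => by have := (abs_le.mp (h i)).1; simp [ha]; linarith,
                fun i => by have := (abs_le.mp (h i)).2; simp [hb]; linarith⟩
    obtain ⟨i, hi⟩ := this
    refine Finset.sum_eq_zero fun j _ => ?_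
    have hx' : x ∉ Function.support (fderiv ℝ (f j)) :=
      fun hmem => (hnorm x i hi j) (support_fderiv_subset ℝ hmem)
    simp [Function.notMem_support.mp hx']

lemma clm_apply_eq_sum {d : ℕ} (l : (Fin d → ℝ) →L[ℝ] ℝ) (w : Fin d → ℝ) :
    l w = ∑ k, w k * l (Pi.single k 1) := by
  have hw : w = ∑ k, w k • (Pi.single k 1 : Fin d → ℝ) := by
    funext j
    rw [Finset.sum_apply]
    simp [Pi.single_apply, eq_comm]
  conv_lhs => rw [hw]
  rw [map_sum]
  simp [smul_eq_mul]

-- component of fderiv for a pi-valued map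
lemma pd_comp_pi {d : ℕ} {ξ : (Fin d → ℝ) → (Fin d → ℝ)} (hξ : ContDiff ℝ (⊤ : ℕ∞) ξ)
    (k j : Fin d) (y : Fin d → ℝ) :
    pd j (fun z => ξ z k) y = fderiv ℝ ξ y (Pi.single j 1) k := by
  have h : HasFDerivAt (fun z => ξ z k)
      ((ContinuousLinearMap.proj k).comp (fderiv ℝ ξ y)) y :=
    (ContinuousLinearMap.proj (R := ℝ) (φ := fun _ : Fin d => ℝ) k).hasFDerivAt.comp y
      (hξ.differentiable (by simp) y).hasFDerivAt
  rw [pd, h.fderiv]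
  rfl

lemma pd_zero_of_nmem {d : ℕ} {ξ : (Fin d → ℝ) → (Fin d → ℝ)}
    (k j : Fin d) {y : Fin d → ℝ} (hy : y ∉ tsupport ξ) :
    pd j (fun z => ξ z k) y = 0 := by
  have hev : (fun z => ξ z k) =ᶠ[nhds y] (fun _ => 0) := by
    filter_upwards [(isClosed_tsupport ξ).isOpen_compl.mem_nhds hy] with z hz
    simp [image_eq_zero_of_notMem_tsupport hz]
  rw [pd, hev.fderiv_eq, fderiv_fun_const]
  simp

lemma alg_identity {d : ℕ} (Lg : ℝ) (a g xv : Fin d → ℝ) (c p : Fin d → Fin d → ℝ) :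
    ∑ i, (Lg * p i i + xv i * ∑ j, c i j * g j)
      = (∑ j, ((∑ i, xv i * c i j) + ∑ k, a k * p j k) * g j)
        - ∑ i, ∑ j, (a i * g j - Lg * (if i = j then 1 else 0)) * p j i := by
  simp only [add_mul, sub_mul, Finset.sum_add_distrib, Finset.sum_sub_distrib,
    Finset.sum_mul, Finset.mul_sum, mul_ite, ite_mul, mul_one, mul_zero, zero_mul]
  simp only [Finset.sum_ite_eq, Finset.mem_univ, if_true]
  have h1 : ∑ x : Fin d, ∑ i : Fin d, xv i * c i x * g x
      = ∑ x : Fin d, ∑ i : Fin d, xv x * (c x i * g i) := by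
    rw [Finset.sum_comm]
    exact Finset.sum_congr rfl fun i _ => Finset.sum_congr rfl fun j _ => by ring
  have h2 : ∑ x : Fin d, ∑ y : Fin d, a x * g y * p y x
      = ∑ x : Fin d, ∑ i : Fin d, a i * p x i * g x := by
    rw [Finset.sum_comm]
    exact Finset.sum_congr rfl fun i _ => Finset.sum_congr rfl fun j _ => by ring
  rw [h1, h2]
  ring

lemma main_deriv {d : ℕ} {D : Set (Fin d → ℝ)} (hD : IsOpen D)
    {L : (Fin d → ℝ) → ℝ} (hL : ContDiff ℝ 1 L)
    {u : (Fin d → ℝ) → ℝ} (hu : ContDiffOn ℝ 2 u D)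
    {ξ : (Fin d → ℝ) → (Fin d → ℝ)} (hξ : ContDiff ℝ (⊤ : ℕ∞) ξ) (hξc : HasCompactSupport ξ)
    (hξD : tsupport ξ ⊆ D) :
    HasDerivAt (fun ε : ℝ => ∫ y in D, (L (grad (fun z => u (z + ε • ξ z)) y) - L (grad u y)))
      (∫ y in D, ∑ i, ∑ j,
        (grad u y i * grad L (grad u y) j - L (grad u y) * (if i = j then 1 else 0)) *
          pd j (fun z => ξ z i) y) 0 := by
  classical
  set K := tsupport ξ with hKdef
  have hKc : IsCompact K := hξc
  obtain ⟨δ, hδ0, hδK⟩ := hKc.exists_thickening_subset_open hD hξD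
  obtain ⟨M, hM⟩ := hξc.exists_bound_of_continuous hξ.continuous
  have hM0 : 0 ≤ M := le_trans (norm_nonneg _) (hM 0)
  set r : ℝ := δ / (2 * (M + 1)) with hrdef
  have hr0 : 0 < r := div_pos hδ0 (by linarith)
  -- membership of the perturbed point
  have hmem : ∀ (ε : ℝ), |ε| < 2 * r → ∀ y ∈ D, y + ε • ξ y ∈ D := by
    intro ε hε y hy
    by_cases hyK : y ∈ K
    · apply hδK
      rw [mem_thickening_iff]
      refine ⟨y, hyK, ?_⟩
      rw [dist_eq_norm, add_sub_cancel_left, norm_smul, Real.norm_eq_abs]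
      calc |ε| * ‖ξ y‖ ≤ |ε| * (M + 1) := by
            apply mul_le_mul_of_nonneg_left _ (abs_nonneg ε)
            linarith [hM y]
        _ < (2 * r) * (M + 1) := by
            apply mul_lt_mul_of_pos_right hε
            linarith
        _ = δ := by
            rw [hrdef]; field_simp
    · rw [image_eq_zero_of_notMem_tsupport hyK]
      simpa using hy
  -- gradient components are C¹ on D
  have hgradk : ∀ k : Fin d, ContDiffOn ℝ 1 (fun y => grad u y k) D := by
    intro k
    have hfd : ContDiffOn ℝ 1 (fderiv ℝ u) D := hu.fderiv_of_isOpen hD (by norm_num)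
    have := (ContinuousLinearMap.apply ℝ ℝ (Pi.single k 1 : Fin d → ℝ)).contDiff.comp_contDiffOn
      (s := D) (f := fderiv ℝ u) hfd
    exact this
  have hgradD : ContDiffOn ℝ 1 (grad u) D := contDiffOn_pi.2 hgradk
  have hdiffgk : ∀ (k : Fin d) (w : Fin d → ℝ), w ∈ D →
      DifferentiableAt ℝ (fun y => grad u y k) w := fun k w hw =>
    ((hgradk k).differentiableOn one_ne_zero).differentiableAt (hD.mem_nhds hw)
  -- the parametric families
  set A : ℝ → (Fin d → ℝ) → Fin d → ℝ := fun ε y j =>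
    ∑ k, grad u (y + ε • ξ y) k * ((if k = j then (1:ℝ) else 0) + ε * pd j (fun z => ξ z k) y)
    with hAdef
  set A' : ℝ → (Fin d → ℝ) → Fin d → ℝ := fun ε y j =>
    (∑ k, (fderiv ℝ (fun w => grad u w k) (y + ε • ξ y) (ξ y)) *
        ((if k = j then (1:ℝ) else 0) + ε * pd j (fun z => ξ z k) y)) +
    ∑ k, grad u (y + ε • ξ y) k * pd j (fun z => ξ z k) y
    with hA'def
  set F : ℝ → (Fin d → ℝ) → ℝ := fun ε y => L (A ε y) - L (grad u y) with hFdef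
  set F' : ℝ → (Fin d → ℝ) → ℝ := fun ε y => fderiv ℝ L (A ε y) (A' ε y) with hF'def
  have hA0 : ∀ y, A 0 y = grad u y := by
    intro y
    funext j
    simp [hAdef, mul_ite, Finset.sum_ite_eq']
  -- pointwise derivative in ε
  have hFderiv : ∀ y ∈ D, ∀ ε ∈ ball (0:ℝ) r, HasDerivAt (fun t => F t y) (F' ε y) ε := by
    intro y hy ε hε
    rw [mem_ball, dist_zero_right, Real.norm_eq_abs] at hε
    have hqD : y + ε • ξ y ∈ D := hmem ε (by linarith) y hy
    have hp : HasDerivAt (fun t : ℝ => y + t • ξ y) (ξ y) ε := by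
      simpa using ((hasDerivAt_id ε).smul_const (ξ y)).const_add y
    have hgk : ∀ k, HasDerivAt (fun t => grad u (y + t • ξ y) k)
        (fderiv ℝ (fun w => grad u w k) (y + ε • ξ y) (ξ y)) ε :=
      fun k => (hdiffgk k _ hqD).hasFDerivAt.comp_hasDerivAt ε hp
    have hAj : ∀ j, HasDerivAt (fun t => A t y j) (A' ε y j) ε := by
      intro j
      have hterm : ∀ k ∈ Finset.univ, HasDerivAt
          (fun t => grad u (y + t • ξ y) k *
            ((if k = j then (1:ℝ) else 0) + t * pd j (fun z => ξ z k) y))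
          (fderiv ℝ (fun w => grad u w k) (y + ε • ξ y) (ξ y) *
            ((if k = j then (1:ℝ) else 0) + ε * pd j (fun z => ξ z k) y)
            + grad u (y + ε • ξ y) k * pd j (fun z => ξ z k) y) ε := by
        intro k _
        have h2 : HasDerivAt
            (fun t : ℝ => (if k = j then (1:ℝ) else 0) + t * pd j (fun z => ξ z k) y)
            (pd j (fun z => ξ z k) y) ε := by
          simpa using (hasDerivAt_mul_const (pd j (fun z => ξ z k) y)).const_add
            (if k = j then (1:ℝ) else 0)
        exact (hgk k).mul h2
      have hsum := HasDerivAt.fun_sum hterm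
      rw [Finset.sum_add_distrib] at hsum
      exact hsum
    have hA : HasDerivAt (fun t => A t y) (A' ε y) ε := hasDerivAt_pi.2 hAj
    have hLA : HasDerivAt (fun t => L (A t y)) (fderiv ℝ L (A ε y) (A' ε y)) ε :=
      ((hL.differentiable one_ne_zero) (A ε y)).hasFDerivAt.comp_hasDerivAt ε hA
    exact hLA.sub_const _
  -- the integrand equals F ε on D for small ε
  have hEq : ∀ (ε : ℝ), |ε| < 2 * r → ∀ y ∈ D,
      L (grad (fun z => u (z + ε • ξ z)) y) = L (A ε y) := by
    intro ε hε y hy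
    have hqD : y + ε • ξ y ∈ D := hmem ε hε y hy
    have hu_diff : DifferentiableAt ℝ u (y + ε • ξ y) :=
      (hu.differentiableOn (by norm_num)).differentiableAt (hD.mem_nhds hqD)
    have hinner : HasFDerivAt (fun z => z + ε • ξ z)
        (ContinuousLinearMap.id ℝ (Fin d → ℝ) + ε • fderiv ℝ ξ y) y :=
      (hasFDerivAt_id y).add (((hξ.differentiable (by simp) y).hasFDerivAt).const_smul ε)
    have hv : HasFDerivAt (fun z => u (z + ε • ξ z))
        ((fderiv ℝ u (y + ε • ξ y)).comp
          (ContinuousLinearMap.id ℝ (Fin d → ℝ) + ε • fderiv ℝ ξ y)) y :=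
      hu_diff.hasFDerivAt.comp y hinner
    congr 1
    funext j
    show pd j (fun z => u (z + ε • ξ z)) y = A ε y j
    rw [pd, hv.fderiv]
    rw [ContinuousLinearMap.comp_apply]
    rw [clm_apply_eq_sum]
    rw [hAdef]
    refine Finset.sum_congr rfl fun k _ => ?_
    have hw : (ContinuousLinearMap.id ℝ (Fin d → ℝ) + ε • fderiv ℝ ξ y) (Pi.single j 1) k
        = (if k = j then (1:ℝ) else 0) + ε * pd j (fun z => ξ z k) y := by
      rw [ContinuousLinearMap.add_apply, ContinuousLinearMap.smul_apply,
        ContinuousLinearMap.id_apply, pd_comp_pi hξ]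
      simp [Pi.single_apply]
    rw [hw]
    show ((if k = j then (1:ℝ) else 0) + ε * pd j (fun z => ξ z k) y) * grad u (y + ε • ξ y) k
        = grad u (y + ε • ξ y) k * ((if k = j then (1:ℝ) else 0) + ε * pd j (fun z => ξ z k) y)
    ring
  have hPc : Continuous (fun p : ℝ × (Fin d → ℝ) => p.2 + p.1 • ξ p.2) :=
    continuous_snd.add (continuous_fst.smul (hξ.continuous.comp continuous_snd))
  have hPmaps : MapsTo (fun p : ℝ × (Fin d → ℝ) => p.2 + p.1 • ξ p.2)
      (closedBall (0:ℝ) r ×ˢ D) D := by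
    rintro ⟨ε, y⟩ ⟨hε, hy⟩
    rw [mem_closedBall, dist_zero_right, Real.norm_eq_abs] at hε
    exact hmem ε (by linarith) y hy
  have hpdcont : ∀ k j : Fin d, Continuous (fun y => pd j (fun z => ξ z k) y) := by
    intro k j
    have hξk : ContDiff ℝ (⊤ : ℕ∞) (fun z => ξ z k) :=
      (ContinuousLinearMap.proj (R := ℝ) (φ := fun _ : Fin d => ℝ) k).contDiff.comp hξ
    exact (hξk.continuous_fderiv (by simp)).clm_apply continuous_const
  have hAcont : ContinuousOn (fun p : ℝ × (Fin d → ℝ) => A p.1 p.2)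
      (closedBall (0:ℝ) r ×ˢ D) := by
    rw [continuousOn_pi]
    intro j
    apply continuousOn_finset_sum
    intro k _
    exact (((hgradk k).continuousOn.comp hPc.continuousOn hPmaps).mul
      ((continuous_const.add (continuous_fst.mul
        ((hpdcont k j).comp continuous_snd))).continuousOn))
  have hA'cont : ContinuousOn (fun p : ℝ × (Fin d → ℝ) => A' p.1 p.2)
      (closedBall (0:ℝ) r ×ˢ D) := by
    rw [continuousOn_pi]
    intro j
    apply ContinuousOn.add
    · apply continuousOn_finset_sum
      intro k _
      refine ContinuousOn.mul ?_ ((continuous_const.add (continuous_fst.mul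
        ((hpdcont k j).comp continuous_snd))).continuousOn)
      exact ContinuousOn.clm_apply
        (((hgradk k).continuousOn_fderiv_of_isOpen hD le_rfl).comp hPc.continuousOn hPmaps)
        ((hξ.continuous.comp continuous_snd).continuousOn)
    · apply continuousOn_finset_sum
      intro k _
      exact ((hgradk k).continuousOn.comp hPc.continuousOn hPmaps).mul
        ((hpdcont k j).comp continuous_snd).continuousOn
  -- joint continuity of F' on closedBall 0 r ×ˢ D
  have hF'cont : ContinuousOn (fun p : ℝ × (Fin d → ℝ) => F' p.1 p.2)
      (closedBall (0:ℝ) r ×ˢ D) := by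
    exact ContinuousOn.clm_apply
      ((hL.continuous_fderiv one_ne_zero).comp_continuousOn hAcont) hA'cont
  -- continuity of F ε on D for |ε| ≤ r
  have hFcont : ∀ ε : ℝ, |ε| ≤ r → ContinuousOn (F ε) D := by
    intro ε hεr
    have hmk : MapsTo (fun y : Fin d → ℝ => ((ε, y) : ℝ × (Fin d → ℝ)))
        D (closedBall (0:ℝ) r ×ˢ D) := by
      intro y hy
      constructor
      · rw [mem_closedBall, dist_zero_right, Real.norm_eq_abs]; exact hεr
      · exact hy
    have h1 : ContinuousOn (fun y => A ε y) D := by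
      have := hAcont.comp (continuous_const.prodMk continuous_id).continuousOn hmk
      simpa [Function.comp_def] using this
    exact (hL.continuous.comp_continuousOn h1).sub
      (hL.continuous.comp_continuousOn hgradD.continuousOn)
  -- F' vanishes off K
  have hF'zero : ∀ (ε : ℝ) (y : Fin d → ℝ), y ∉ K → F' ε y = 0 := by
    intro ε y hy
    have h0 : ξ y = 0 := image_eq_zero_of_notMem_tsupport hy
    have hA'0 : A' ε y = 0 := by
      funext j
      simp [hA'def, h0, pd_zero_of_nmem _ _ hy]
    rw [hF'def]
    simp only [hA'0, map_zero]
  -- bound via compactness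
  obtain ⟨C, hC⟩ := ((isCompact_closedBall (0:ℝ) r).prod hKc).exists_bound_of_continuousOn
    (hF'cont.mono (fun p hp => ⟨hp.1, hξD hp.2⟩))
  set bound : (Fin d → ℝ) → ℝ := K.indicator (fun _ => C) with hbdef
  have hKmeas : MeasurableSet K := (isClosed_tsupport ξ).measurableSet
  have hbound_int : Integrable bound (volume.restrict D) := by
    rw [hbdef, integrable_indicator_iff hKmeas]
    exact (integrableOn_const_iff enorm_ne_top).2
      (Or.inr (lt_of_le_of_lt (Measure.restrict_apply_le _ _) hKc.measure_lt_top))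
  have h_bound : ∀ᵐ y ∂(volume.restrict D), ∀ ε ∈ ball (0:ℝ) r, ‖F' ε y‖ ≤ bound y := by
    refine ((ae_restrict_iff' hD.measurableSet).2 (ae_of_all _ fun y hy => ?_))
    intro ε hε
    by_cases hyK : y ∈ K
    · have hmemS : ((ε, y) : ℝ × (Fin d → ℝ)) ∈ closedBall (0:ℝ) r ×ˢ K :=
        ⟨ball_subset_closedBall hε, hyK⟩
      simpa [hbdef, indicator_of_mem hyK] using hC _ hmemS
    · rw [hF'zero ε y hyK]
      simp [hbdef, indicator_of_notMem hyK]
  have hF_meas : ∀ᶠ ε in nhds (0:ℝ), AEStronglyMeasurable (F ε) (volume.restrict D) := by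
    filter_upwards [Metric.ball_mem_nhds (0:ℝ) hr0] with ε hε
    have hε' : |ε| ≤ r := by
      have := mem_ball_zero_iff.1 hε
      rw [Real.norm_eq_abs] at this
      linarith
    exact (hFcont ε hε').aestronglyMeasurable hD.measurableSet
  have hF_int : Integrable (F 0) (volume.restrict D) := by
    have h0 : F 0 = fun _ => 0 := by
      funext y
      show L (A 0 y) - L (grad u y) = 0
      rw [hA0 y, sub_self]
    rw [h0]
    exact integrable_zero _ _ _
  have hF'0cont : ContinuousOn (F' 0) D := by
    have hmk : MapsTo (fun y : Fin d → ℝ => ((0:ℝ), y)) D (closedBall (0:ℝ) r ×ˢ D) :=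
      fun y hy => ⟨mem_closedBall_self hr0.le, hy⟩
    have := hF'cont.comp (continuous_const.prodMk continuous_id).continuousOn hmk
    simpa [Function.comp_def] using this
  have hF'_meas : AEStronglyMeasurable (F' 0) (volume.restrict D) :=
    hF'0cont.aestronglyMeasurable hD.measurableSet
  have h_diff : ∀ᵐ y ∂(volume.restrict D), ∀ ε ∈ ball (0:ℝ) r,
      HasDerivAt (fun t => F t y) (F' ε y) ε :=
    (ae_restrict_iff' hD.measurableSet).2 (ae_of_all _ fun y hy ε hε => hFderiv y hy ε hε)
  obtain ⟨hF'int, hder⟩ := hasDerivAt_integral_of_dominated_loc_of_deriv_le (Metric.ball_mem_nhds (0:ℝ) hr0) hF_meas hF_int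
    hF'_meas h_bound hbound_int h_diff
  -- the divergence-theorem step
  set tgt : (Fin d → ℝ) → ℝ := fun y => ∑ i, ∑ j,
    (grad u y i * grad L (grad u y) j - L (grad u y) * (if i = j then 1 else 0)) *
      pd j (fun z => ξ z i) y with htgtdef
  set f : Fin d → (Fin d → ℝ) → ℝ := fun i y => L (grad u y) * ξ y i with hfdef
  have hLgu : ContDiffOn ℝ 1 (fun y => L (grad u y)) D := hL.comp_contDiffOn hgradD
  have hfC1 : ∀ i, ContDiff ℝ 1 (f i) := by
    intro i
    rw [contDiff_iff_contDiffAt]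
    intro y
    by_cases hy : y ∈ D
    · have hCOn : ContDiffOn ℝ 1 (f i) D := by
        rw [hfdef]
        exact hLgu.mul ((((ContinuousLinearMap.proj (R := ℝ) (φ := fun _ : Fin d => ℝ)
          i).contDiff.comp hξ).of_le (by simp)).contDiffOn)
      exact hCOn.contDiffAt (hD.mem_nhds hy)
    · have hyK : y ∉ K := fun h => hy (hξD h)
      have hev : f i =ᶠ[nhds y] fun _ => (0:ℝ) := by
        filter_upwards [(isClosed_tsupport ξ).isOpen_compl.mem_nhds hyK] with z hz
        simp [hfdef, image_eq_zero_of_notMem_tsupport hz]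
      exact (contDiffAt_const (c := (0:ℝ))).congr_of_eventuallyEq hev
  have hfsupp : ∀ i, HasCompactSupport (f i) := by
    intro i
    apply HasCompactSupport.intro hKc
    intro x hx
    simp [hfdef, image_eq_zero_of_notMem_tsupport hx]
  have hgradLfact : ∀ (w : Fin d → ℝ) (j : Fin d),
      grad L w j = fderiv ℝ L w (Pi.single j 1) := fun _ _ => rfl
  have hdivD : ∀ y ∈ D, (∑ i, fderiv ℝ (f i) y (Pi.single i 1)) = F' 0 y - tgt y := by
    intro y hy
    have hguF : HasFDerivAt (grad u) (fderiv ℝ (grad u) y) y :=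
      ((hgradD.differentiableOn one_ne_zero).differentiableAt (hD.mem_nhds hy)).hasFDerivAt
    have hLguF : HasFDerivAt (fun w => L (grad u w))
        ((fderiv ℝ L (grad u y)).comp (fderiv ℝ (grad u) y)) y :=
      ((hL.differentiable one_ne_zero) (grad u y)).hasFDerivAt.comp y hguF
    have hcomp_j : ∀ (j : Fin d) (v : Fin d → ℝ),
        fderiv ℝ (fun w => grad u w j) y v = fderiv ℝ (grad u) y v j := by
      intro j v
      have h : HasFDerivAt (fun w => grad u w j)
          ((ContinuousLinearMap.proj (R := ℝ) (φ := fun _ : Fin d => ℝ) j).comp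
            (fderiv ℝ (grad u) y)) y :=
        (ContinuousLinearMap.proj (R := ℝ) (φ := fun _ : Fin d => ℝ) j).hasFDerivAt.comp y hguF
      rw [h.fderiv]
      rfl
    have e1 : ∀ i, fderiv ℝ (f i) y (Pi.single i 1)
        = L (grad u y) * pd i (fun z => ξ z i) y
          + ξ y i * ∑ j, fderiv ℝ (fun w => grad u w j) y (Pi.single i 1) *
              grad L (grad u y) j := by
      intro i
      have hξiF : HasFDerivAt (fun z => ξ z i) (fderiv ℝ (fun z => ξ z i) y) y :=
        ((((ContinuousLinearMap.proj (R := ℝ) (φ := fun _ : Fin d => ℝ) i).contDiff.comp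
          hξ).differentiable (by simp)) y).hasFDerivAt
      have hmul := hLguF.mul hξiF
      have hfder : fderiv ℝ (f i) y
          = L (grad u y) • fderiv ℝ (fun z => ξ z i) y
            + ξ y i • ((fderiv ℝ L (grad u y)).comp (fderiv ℝ (grad u) y)) := by
        rw [hfdef]
        exact hmul.fderiv
      rw [hfder, ContinuousLinearMap.add_apply, ContinuousLinearMap.smul_apply,
        ContinuousLinearMap.smul_apply, ContinuousLinearMap.comp_apply, smul_eq_mul,
        smul_eq_mul]
      congr 1
      rw [clm_apply_eq_sum (fderiv ℝ L (grad u y)) (fderiv ℝ (grad u) y (Pi.single i 1))]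
      congr 1
      refine Finset.sum_congr rfl fun j _ => ?_
      rw [hcomp_j, hgradLfact]
    have e2 : F' 0 y = ∑ j, (fderiv ℝ (fun w => grad u w j) y (ξ y)
        + ∑ k, grad u y k * pd j (fun z => ξ z k) y) * grad L (grad u y) j := by
      show fderiv ℝ L (A 0 y) (A' 0 y) = _
      rw [hA0 y, clm_apply_eq_sum]
      refine Finset.sum_congr rfl fun j _ => ?_
      rw [hgradLfact]
      congr 1
      show (∑ k, (fderiv ℝ (fun w => grad u w k) (y + (0:ℝ) • ξ y) (ξ y)) *
          ((if k = j then (1:ℝ) else 0) + 0 * pd j (fun z => ξ z k) y)) +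
          (∑ k, grad u (y + (0:ℝ) • ξ y) k * pd j (fun z => ξ z k) y) = _
      simp [mul_ite, Finset.sum_ite_eq']
    have e3 : ∀ j, fderiv ℝ (fun w => grad u w j) y (ξ y)
        = ∑ i, ξ y i * fderiv ℝ (fun w => grad u w j) y (Pi.single i 1) := fun j =>
      clm_apply_eq_sum _ _
    calc ∑ i, fderiv ℝ (f i) y (Pi.single i 1)
        = ∑ i, (L (grad u y) * pd i (fun z => ξ z i) y
            + ξ y i * ∑ j, fderiv ℝ (fun w => grad u w j) y (Pi.single i 1) *
                grad L (grad u y) j) := Finset.sum_congr rfl fun i _ => e1 i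
      _ = F' 0 y - tgt y := by
          rw [e2]
          simp only [e3, htgtdef]
          exact alg_identity (L (grad u y)) (grad u y) (fun j => grad L (grad u y) j) (ξ y)
            (fun i j => fderiv ℝ (fun w => grad u w j) y (Pi.single i 1))
            (fun j i => pd j (fun z => ξ z i) y)
  have hsupp_tgt : ∀ y, y ∉ K → tgt y = 0 := by
    intro y hy
    rw [htgtdef]
    refine Finset.sum_eq_zero fun i _ => Finset.sum_eq_zero fun j _ => ?_
    rw [pd_zero_of_nmem _ _ hy, mul_zero]
  have htgtcont : ContinuousOn tgt D := by
    rw [htgtdef]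
    refine continuousOn_finset_sum _ fun i _ => continuousOn_finset_sum _ fun j _ => ?_
    refine ContinuousOn.mul (ContinuousOn.sub ?_ ?_) (hpdcont i j).continuousOn
    · exact ((hgradk i).continuousOn).mul
        (((hL.continuous_fderiv one_ne_zero).clm_apply continuous_const).comp_continuousOn
          hgradD.continuousOn)
    · exact (hL.continuous.comp_continuousOn hgradD.continuousOn).mul continuousOn_const
  have htgt_int : IntegrableOn tgt D := by
    have h1 : IntegrableOn tgt K := (htgtcont.mono hξD).integrableOn_compact hKc
    have h2 : IntegrableOn tgt (D \ K) :=
      (integrableOn_congr_fun (fun y hy => hsupp_tgt y hy.2)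
        (hD.measurableSet.diff hKmeas)).2 (integrableOn_zero)
    refine (h1.union h2).mono_set fun y hy => ?_
    by_cases hyK : y ∈ K
    · exact Or.inl hyK
    · exact Or.inr ⟨hy, hyK⟩
  have hzero_offD : ∀ y, y ∉ D → (∑ i, fderiv ℝ (f i) y (Pi.single i 1)) = 0 := by
    intro y hy
    refine Finset.sum_eq_zero fun i _ => ?_
    have hsub : Function.support (f i) ⊆ Function.support ξ := by
      intro x hx
      simp only [Function.mem_support] at hx ⊢
      intro h0
      exact hx (by simp [hfdef, h0])
    have hts : tsupport (f i) ⊆ K := closure_mono hsub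
    have hnot : y ∉ tsupport (f i) := fun h => hy (hξD (hts h))
    have hfz : fderiv ℝ (f i) y = 0 := by
      by_contra h
      exact hnot (support_fderiv_subset ℝ (Function.mem_support.2 h))
    rw [hfz]
    rfl
  have hdiv_int : ∫ y in D, (∑ i, fderiv ℝ (f i) y (Pi.single i 1)) = 0 := by
    rw [setIntegral_eq_integral_of_forall_compl_eq_zero hzero_offD]
    exact div_int_zero f hfC1 hfsupp
  have hval : (∫ y in D, F' 0 y) = ∫ y in D, tgt y := by
    have hsub : ∫ y in D, (F' 0 y - tgt y) = (∫ y in D, F' 0 y) - ∫ y in D, tgt y :=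
      integral_sub hF'int htgt_int
    have hcongr : ∫ y in D, (F' 0 y - tgt y)
        = ∫ y in D, (∑ i, fderiv ℝ (f i) y (Pi.single i 1)) :=
      setIntegral_congr_fun hD.measurableSet (fun y hy => (hdivD y hy).symm)
    have hfin : (∫ y in D, F' 0 y) - ∫ y in D, tgt y = 0 := by
      rw [← hsub, hcongr, hdiv_int]
    linarith
  have hev : (fun ε : ℝ => ∫ y in D, (L (grad (fun z => u (z + ε • ξ z)) y) - L (grad u y)))
      =ᶠ[nhds (0:ℝ)] fun ε => ∫ y in D, F ε y := by
    filter_upwards [Metric.ball_mem_nhds (0:ℝ) hr0] with ε hε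
    refine setIntegral_congr_fun hD.measurableSet fun y hy => ?_
    have hε' : |ε| < 2 * r := by
      have := mem_ball_zero_iff.1 hε
      rw [Real.norm_eq_abs] at this
      linarith
    show L (grad (fun z => u (z + ε • ξ z)) y) - L (grad u y) = F ε y
    rw [hFdef]
    rw [hEq ε hε' y hy]
  have hfinal := hder.congr_of_eventuallyEq hev
  rw [hval] at hfinal
  exact hfinal


end Aux

/-- second Variational Principle for `ℱ[u] = ∫_D L(∇u)`.  For every test field
`ξ`, the inner-variation functional `F(ε) = ∫_D [L(∇(u∘(id+εξ))) − L(∇u)]` is differentiable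
at `0` with `F′(0) = ∫_D ∑_{i,j} T_{ij} ∂_j ξ_i`, where `T = ∇u ⊗ ∇L(∇u) − L(∇u) I_d`; in
particular `F′(0) = 0` for every `ξ` iff `T` is divergence-free in the distributional sense. -/
theorem stmt15 (d : ℕ) (D : Set (Fin d → ℝ)) (hD : IsOpen D)
    (L : (Fin d → ℝ) → ℝ) (hL : ContDiff ℝ 1 L)
    (u : (Fin d → ℝ) → ℝ) (hu : ContDiffOn ℝ 2 u D)
    (T : Fin d → Fin d → (Fin d → ℝ) → ℝ)
    (hT : ∀ i j y, T i j y =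
      grad u y i * grad L (grad u y) j - L (grad u y) * (if i = j then 1 else 0)) :
    (∀ ξ : (Fin d → ℝ) → (Fin d → ℝ),
      ContDiff ℝ (⊤ : ℕ∞) ξ → HasCompactSupport ξ → tsupport ξ ⊆ D →
      HasDerivAt
        (fun ε : ℝ =>
          ∫ y in D, (L (grad (fun z => u (z + ε • ξ z)) y) - L (grad u y)))
        (∫ y in D, ∑ i, ∑ j, T i j y * pd j (fun z => ξ z i) y) 0) ∧
    ((∀ ξ : (Fin d → ℝ) → (Fin d → ℝ),
        ContDiff ℝ (⊤ : ℕ∞) ξ → HasCompactSupport ξ → tsupport ξ ⊆ D →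
        deriv (fun ε : ℝ =>
          ∫ y in D, (L (grad (fun z => u (z + ε • ξ z)) y) - L (grad u y))) 0 = 0) ↔
      (∀ ξ : (Fin d → ℝ) → (Fin d → ℝ),
        ContDiff ℝ (⊤ : ℕ∞) ξ → HasCompactSupport ξ → tsupport ξ ⊆ D →
        ∫ y in D, ∑ i, ∑ j, T i j y * pd j (fun z => ξ z i) y = 0)) := by
  have key : ∀ ξ : (Fin d → ℝ) → (Fin d → ℝ),
      ContDiff ℝ (⊤ : ℕ∞) ξ → HasCompactSupport ξ → tsupport ξ ⊆ D →
      (∫ y in D, ∑ i, ∑ j, T i j y * pd j (fun z => ξ z i) y)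
        = ∫ y in D, ∑ i, ∑ j,
            (grad u y i * grad L (grad u y) j - L (grad u y) * (if i = j then 1 else 0)) *
              pd j (fun z => ξ z i) y := by
    intro ξ h1 h2 h3
    refine MeasureTheory.setIntegral_congr_fun hD.measurableSet fun y hy => ?_
    simp only [hT]
  have main : ∀ ξ : (Fin d → ℝ) → (Fin d → ℝ),
      ContDiff ℝ (⊤ : ℕ∞) ξ → HasCompactSupport ξ → tsupport ξ ⊆ D →
      HasDerivAt
        (fun ε : ℝ =>
          ∫ y in D, (L (grad (fun z => u (z + ε • ξ z)) y) - L (grad u y)))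
        (∫ y in D, ∑ i, ∑ j, T i j y * pd j (fun z => ξ z i) y) 0 := by
    intro ξ h1 h2 h3
    rw [key ξ h1 h2 h3]
    exact main_deriv hD hL hu h1 h2 h3
  refine ⟨main, ?_, ?_⟩
  · intro h ξ h1 h2 h3
    rw [← (main ξ h1 h2 h3).deriv]
    exact h ξ h1 h2 h3
  · intro h ξ h1 h2 h3
    rw [(main ξ h1 h2 h3).deriv]
    exact h ξ h1 h2 h3
end
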